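/- Let f(pᵢ,qᵢ) be a smooth function, k,ℓ ≥ 0, and let F = (f/k!)·∂^{k+ℓ}/∂pᵢᵏ∂qᵢˡ. Define F_j := (1/(k-j)!)·(∫^{(j+1)} f dqᵢ^{j+1} / pᵢ^{j+1})·∂^{k+ℓ}/∂pᵢ^{k-j}∂qᵢ^{ℓ+j} for 0 ≤ j ≤ k, where ∫^{(m)} denotes an m-fold antiderivative in qᵢ (choosing fixed antiderivatives). Then G := Σ_{j=0}^{k} F_j satisfies [L, G] = F on the region where pᵢ ≠ 0. -/

import Mathlib

open Finset

/-- Phase space with `d` degrees of freedom: points `(q, p)`. -/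
abbrev Phase (d : ℕ) := (Fin d → ℝ) × (Fin d → ℝ)

/-- Partial derivative with respect to `q i`. -/
noncomputable def pdq {d : ℕ} (i : Fin d) (f : Phase d → ℝ) : Phase d → ℝ :=
  fun x => fderiv ℝ f x (Pi.single i 1, 0)

/-- Partial derivative with respect to `p i`. -/
noncomputable def pdp {d : ℕ} (i : Fin d) (f : Phase d → ℝ) : Phase d → ℝ :=
  fun x => fderiv ℝ f x (0, Pi.single i 1)

/-- The operator `L = ∑ i, pᵢ ∂/∂qᵢ`. -/
noncomputable def Lop {d : ℕ} (f : Phase d → ℝ) : Phase d → ℝ :=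
  fun x => ∑ i, x.2 i * pdq i f x


-- H1 smoothness
lemma contDiff_pdv {d : ℕ} {f : Phase d → ℝ} (hf : ContDiff ℝ (⊤ : ℕ∞) f) (v : Phase d) :
    ContDiff ℝ (⊤ : ℕ∞) (fun x => fderiv ℝ f x v) :=
  (hf.fderiv_right (by simp)).clm_apply contDiff_const

lemma contDiff_pdq {d : ℕ} (i : Fin d) {f : Phase d → ℝ} (hf : ContDiff ℝ (⊤ : ℕ∞) f) :
    ContDiff ℝ (⊤ : ℕ∞) (pdq i f) := contDiff_pdv hf _

lemma contDiff_pdp {d : ℕ} (i : Fin d) {f : Phase d → ℝ} (hf : ContDiff ℝ (⊤ : ℕ∞) f) :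
    ContDiff ℝ (⊤ : ℕ∞) (pdp i f) := contDiff_pdv hf _

-- H2 symmetry
lemma pd_comm {d : ℕ} {f : Phase d → ℝ} (hf : ContDiff ℝ (⊤ : ℕ∞) f) (v w : Phase d) (x : Phase d) :
    fderiv ℝ (fun y => fderiv ℝ f y v) x w = fderiv ℝ (fun y => fderiv ℝ f y w) x v := by
  have hdf : Differentiable ℝ f := hf.differentiable (by simp)
  have hdf' : Differentiable ℝ (fderiv ℝ f) := (hf.fderiv_right (m := (⊤ : ℕ∞)) (by simp)).differentiable (by simp)
  have h1 : ∀ u w' : Phase d, fderiv ℝ (fun y => fderiv ℝ f y u) x w' =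
      fderiv ℝ (fderiv ℝ f) x w' u := by
    intro u w'
    rw [fderiv_clm_apply (hdf' x) (differentiableAt_const u)]
    simp
  have hsym := second_derivative_symmetric (fun y => (hdf y).hasFDerivAt)
    (hdf' x).hasFDerivAt v w
  rw [h1 v w, h1 w v]
  exact hsym.symm
section helpers
variable {d : ℕ}

-- coordinate function
noncomputable def coordP (j : Fin d) : Phase d →L[ℝ] ℝ :=
  (ContinuousLinearMap.proj j).comp (ContinuousLinearMap.snd ℝ (Fin d → ℝ) (Fin d → ℝ))

lemma coordP_apply (j : Fin d) (v : Phase d) : coordP j v = v.2 j := rfl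

lemma hasFDerivAt_coordP (j : Fin d) (x : Phase d) :
    HasFDerivAt (fun y : Phase d => y.2 j) (coordP j) x := (coordP j).hasFDerivAt

lemma diff_coordP (j : Fin d) (x : Phase d) :
    DifferentiableAt ℝ (fun y : Phase d => y.2 j) x := (hasFDerivAt_coordP j x).differentiableAt

lemma fderiv_coordP (j : Fin d) (x v : Phase d) :
    fderiv ℝ (fun y : Phase d => y.2 j) x v = v.2 j := by
  rw [(hasFDerivAt_coordP j x).fderiv]; rfl
end helpers

section comm
variable {d : ℕ} (i : Fin d)

lemma pdq_pdp_comm {f : Phase d → ℝ} (hf : ContDiff ℝ (⊤ : ℕ∞) f) :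
    pdq i (pdp i f) = pdp i (pdq i f) := by
  funext x; exact pd_comm hf _ _ x

lemma pdq_pdq_comm (i' : Fin d) {f : Phase d → ℝ} (hf : ContDiff ℝ (⊤ : ℕ∞) f) :
    pdq i (pdq i' f) = pdq i' (pdq i f) := by
  funext x; exact pd_comm hf _ _ x

lemma contDiff_pdp_iter (m : ℕ) {f : Phase d → ℝ} (hf : ContDiff ℝ (⊤ : ℕ∞) f) :
    ContDiff ℝ (⊤ : ℕ∞) ((pdp i)^[m] f) := by
  induction m generalizing f with
  | zero => exact hf
  | succ m ih => rw [Function.iterate_succ_apply]; exact ih (contDiff_pdp i hf)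

lemma contDiff_pdq_iter (m : ℕ) {f : Phase d → ℝ} (hf : ContDiff ℝ (⊤ : ℕ∞) f) :
    ContDiff ℝ (⊤ : ℕ∞) ((pdq i)^[m] f) := by
  induction m generalizing f with
  | zero => exact hf
  | succ m ih => rw [Function.iterate_succ_apply]; exact ih (contDiff_pdq i hf)

lemma pdq_pdp_iter_comm (m : ℕ) {f : Phase d → ℝ} (hf : ContDiff ℝ (⊤ : ℕ∞) f) :
    pdq i ((pdp i)^[m] f) = (pdp i)^[m] (pdq i f) := by
  induction m generalizing f with
  | zero => rfl
  | succ m ih =>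
    rw [Function.iterate_succ_apply, Function.iterate_succ_apply,
      ih (contDiff_pdp i hf), pdq_pdp_comm i hf]

lemma contDiff_Lop {f : Phase d → ℝ} (hf : ContDiff ℝ (⊤ : ℕ∞) f) :
    ContDiff ℝ (⊤ : ℕ∞) (Lop f) := by
  unfold Lop
  apply ContDiff.sum
  intro j _
  exact ((coordP j).contDiff).mul (contDiff_pdq j hf)

lemma pdq_Lop {f : Phase d → ℝ} (hf : ContDiff ℝ (⊤ : ℕ∞) f) :
    pdq i (Lop f) = Lop (pdq i f) := by
  funext x
  have hdiff : ∀ j : Fin d, ∀ y, DifferentiableAt ℝ (fun y : Phase d => y.2 j * pdq j f y) y :=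
    fun j y => (diff_coordP j y).mul ((contDiff_pdq j hf).differentiable (by simp) y)
  show fderiv ℝ (fun y => ∑ j, y.2 j * pdq j f y) x _ = _
  rw [fderiv_fun_sum (fun j _ => hdiff j x)]
  rw [ContinuousLinearMap.sum_apply]
  unfold Lop
  apply Finset.sum_congr rfl
  intro j _
  rw [fderiv_fun_mul (diff_coordP j x) ((contDiff_pdq j hf).differentiable (by simp) x)]
  simp only [ContinuousLinearMap.add_apply, ContinuousLinearMap.smul_apply, fderiv_coordP]
  have : pdq i (pdq j f) x = pdq j (pdq i f) x := congrFun (pdq_pdq_comm i j hf) x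
  show x.2 j * fderiv ℝ (pdq j f) x (Pi.single i 1, 0) + pdq j f x * (0 : Fin d → ℝ) j = _
  rw [Pi.zero_apply, mul_zero, add_zero]
  show x.2 j * pdq i (pdq j f) x = _
  rw [this]

lemma pdp_Lop {f : Phase d → ℝ} (hf : ContDiff ℝ (⊤ : ℕ∞) f) :
    pdp i (Lop f) = fun x => pdq i f x + Lop (pdp i f) x := by
  funext x
  have hdiff : ∀ j : Fin d, ∀ y, DifferentiableAt ℝ (fun y : Phase d => y.2 j * pdq j f y) y :=
    fun j y => (diff_coordP j y).mul ((contDiff_pdq j hf).differentiable (by simp) y)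
  show fderiv ℝ (fun y => ∑ j, y.2 j * pdq j f y) x _ = _
  rw [fderiv_fun_sum (fun j _ => hdiff j x)]
  rw [ContinuousLinearMap.sum_apply]
  have step : ∀ j : Fin d, fderiv ℝ (fun y : Phase d => y.2 j * pdq j f y) x (0, Pi.single i 1)
      = x.2 j * pdp i (pdq j f) x + pdq j f x * ((Pi.single i 1 : Fin d → ℝ) j) := by
    intro j
    rw [fderiv_fun_mul (diff_coordP j x) ((contDiff_pdq j hf).differentiable (by simp) x)]
    simp only [ContinuousLinearMap.add_apply, ContinuousLinearMap.smul_apply, fderiv_coordP]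
    rfl
  rw [Finset.sum_congr rfl (fun j _ => step j)]
  rw [Finset.sum_add_distrib]
  have h1 : ∑ j : Fin d, pdq j f x * ((Pi.single i 1 : Fin d → ℝ) j) = pdq i f x := by
    rw [Finset.sum_eq_single i]
    · simp
    · intro b _ hb; rw [Pi.single_eq_of_ne hb, mul_zero]
    · intro h; exact absurd (Finset.mem_univ i) h
  have h2 : ∑ j : Fin d, x.2 j * pdp i (pdq j f) x = Lop (pdp i f) x := by
    unfold Lop
    apply Finset.sum_congr rfl
    intro j _
    congr 1
    exact pd_comm hf _ _ x
  rw [h1, h2, add_comm]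
end comm

section comm2
variable {d : ℕ} (i : Fin d)

lemma pdp_add_smul {A B : Phase d → ℝ} (hA : ContDiff ℝ (⊤ : ℕ∞) A) (hB : ContDiff ℝ (⊤ : ℕ∞) B) (c : ℝ) :
    pdp i (fun x => A x + c * B x) = fun x => pdp i A x + c * pdp i B x := by
  funext x
  show fderiv ℝ (fun y => A y + c * B y) x _ = _
  rw [fderiv_fun_add (hA.differentiable (by simp) x)
    ((hB.differentiable (by simp) x).const_mul c),
    fderiv_const_mul (hB.differentiable (by simp) x)]
  simp [pdp]

lemma pdq_iter_Lop (n : ℕ) {f : Phase d → ℝ} (hf : ContDiff ℝ (⊤ : ℕ∞) f) :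
    (pdq i)^[n] (Lop f) = Lop ((pdq i)^[n] f) := by
  induction n generalizing f with
  | zero => rfl
  | succ n ih =>
    rw [Function.iterate_succ_apply, Function.iterate_succ_apply,
      pdq_Lop i hf, ih (contDiff_pdq i hf)]

lemma pdp_iter_Lop (m n : ℕ) {f : Phase d → ℝ} (hf : ContDiff ℝ (⊤ : ℕ∞) f) :
    (pdp i)^[m+1] ((pdq i)^[n] (Lop f))
      = fun x => Lop ((pdp i)^[m+1] ((pdq i)^[n] f)) x
          + ((m:ℝ)+1) * (pdp i)^[m] ((pdq i)^[n+1] f) x := by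
  induction m with
  | zero =>
    rw [pdq_iter_Lop i n hf]
    show pdp i (Lop ((pdq i)^[n] f)) = _
    rw [pdp_Lop i (contDiff_pdq_iter i n hf)]
    funext x
    simp only [zero_add, Function.iterate_one, Nat.cast_zero, one_mul, Function.iterate_zero,
      id_eq]
    rw [← Function.iterate_succ_apply' (pdq i) n f]
    exact add_comm _ _
  | succ m ih =>
    rw [Function.iterate_succ_apply' (pdp i) (m+1), ih]
    have hψ : ContDiff ℝ (⊤ : ℕ∞) ((pdp i)^[m+1] ((pdq i)^[n] f)) :=
      contDiff_pdp_iter i (m+1) (contDiff_pdq_iter i n hf)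
    have hχ : ContDiff ℝ (⊤ : ℕ∞) ((pdp i)^[m] ((pdq i)^[n+1] f)) :=
      contDiff_pdp_iter i m (contDiff_pdq_iter i (n+1) hf)
    rw [pdp_add_smul i (contDiff_Lop hψ) hχ]
    rw [pdp_Lop i hψ]
    funext x
    have e1 : pdq i ((pdp i)^[m+1] ((pdq i)^[n] f)) x
        = (pdp i)^[m+1] ((pdq i)^[n+1] f) x := by
      rw [pdq_pdp_iter_comm i (m+1) (contDiff_pdq_iter i n hf),
        ← Function.iterate_succ_apply' (pdq i) n f]
    have e2 : pdp i ((pdp i)^[m] ((pdq i)^[n+1] f)) x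
        = (pdp i)^[m+1] ((pdq i)^[n+1] f) x := by
      rw [← Function.iterate_succ_apply' (pdp i) m]
    have e3 : Lop (pdp i ((pdp i)^[m+1] ((pdq i)^[n] f))) x
        = Lop ((pdp i)^[m+1+1] ((pdq i)^[n] f)) x := by
      rw [← Function.iterate_succ_apply' (pdp i) (m+1)]
    show pdq i ((pdp i)^[m+1] ((pdq i)^[n] f)) x + Lop (pdp i ((pdp i)^[m+1] ((pdq i)^[n] f))) x
        + ((m:ℝ)+1) * pdp i ((pdp i)^[m] ((pdq i)^[n+1] f)) x = _
    rw [e1, e2, e3]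
    push_cast
    ring
end comm2

section coeff
variable {d : ℕ} (i : Fin d)

/-- the projection `y ↦ (y.2 i, y.1 i)` as a CLM -/
noncomputable def projPQ (i : Fin d) : Phase d →L[ℝ] ℝ × ℝ :=
  (coordP i).prod (((ContinuousLinearMap.proj i).comp
    (ContinuousLinearMap.fst ℝ (Fin d → ℝ) (Fin d → ℝ))))

lemma projPQ_apply (v : Phase d) : projPQ i v = (v.2 i, v.1 i) := rfl

lemma diff_sep {g : ℝ × ℝ → ℝ} {x : Phase d} (hg : DifferentiableAt ℝ g (x.2 i, x.1 i)) :
    DifferentiableAt ℝ (fun y : Phase d => g (y.2 i, y.1 i)) x :=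
  hg.comp x (projPQ i).differentiableAt

lemma pdq_sep {g : ℝ × ℝ → ℝ} {x : Phase d} (hg : DifferentiableAt ℝ g (x.2 i, x.1 i))
    (i' : Fin d) :
    pdq i' (fun y : Phase d => g (y.2 i, y.1 i)) x
      = ((Pi.single i' 1 : Fin d → ℝ) i) * fderiv ℝ g (x.2 i, x.1 i) (0, 1) := by
  show fderiv ℝ (g ∘ projPQ i) x (Pi.single i' 1, 0) = _
  rw [fderiv_comp (x := x) hg (projPQ i).differentiableAt, (projPQ i).fderiv]
  show fderiv ℝ g (projPQ i x) (projPQ i (Pi.single i' 1, 0)) = _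
  have : projPQ i ((Pi.single i' 1, 0) : Phase d)
      = ((Pi.single i' 1 : Fin d → ℝ) i) • ((0 : ℝ), (1 : ℝ)) := by
    rw [projPQ_apply]
    simp [Prod.ext_iff]
  rw [projPQ_apply, this, map_smul]
  simp [smul_eq_mul, mul_comm]

lemma Lop_sep {g : ℝ × ℝ → ℝ} {x : Phase d} (hg : DifferentiableAt ℝ g (x.2 i, x.1 i)) :
    Lop (fun y : Phase d => g (y.2 i, y.1 i)) x
      = x.2 i * fderiv ℝ g (x.2 i, x.1 i) (0, 1) := by
  unfold Lop
  rw [Finset.sum_congr rfl (fun i' _ => by rw [pdq_sep i hg i'])]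
  rw [Finset.sum_eq_single i]
  · simp
  · intro b _ hb; rw [Pi.single_eq_of_ne (Ne.symm hb)]; ring
  · intro h; exact absurd (Finset.mem_univ i) h

lemma Lop_mul {u w : Phase d → ℝ} {x : Phase d} (hu : DifferentiableAt ℝ u x)
    (hw : DifferentiableAt ℝ w x) :
    Lop (fun y => u y * w y) x = Lop u x * w x + u x * Lop w x := by
  unfold Lop
  have step : ∀ i' : Fin d, pdq i' (fun y => u y * w y) x
      = pdq i' u x * w x + u x * pdq i' w x := by
    intro i'
    show fderiv ℝ (fun y => u y * w y) x _ = _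
    rw [fderiv_fun_mul hu hw]
    simp only [ContinuousLinearMap.add_apply, ContinuousLinearMap.smul_apply, smul_eq_mul]
    unfold pdq
    ring
  rw [Finset.sum_congr rfl (fun i' _ => by rw [step i'])]
  rw [Finset.sum_mul, Finset.mul_sum, ← Finset.sum_add_distrib]
  exact Finset.sum_congr rfl (fun i' _ => by ring)
end coeff

section coeff2

lemma uncurry_fderiv_q (F : ℕ → ℝ → ℝ → ℝ)
    (hFs : ∀ m, ContDiff ℝ (⊤ : ℕ∞) (Function.uncurry (F m)))
    (hF : ∀ m (p q : ℝ), HasDerivAt (fun s => F (m + 1) p s) (F m p q) q)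
    (m : ℕ) (p q : ℝ) :
    fderiv ℝ (Function.uncurry (F (m+1))) (p, q) ((0:ℝ), (1:ℝ)) = F m p q := by
  have hcurve : HasDerivAt (fun s : ℝ => ((p, s) : ℝ × ℝ)) ((0:ℝ), (1:ℝ)) q :=
    (hasDerivAt_const q p).prodMk (hasDerivAt_id q)
  have hdF : HasFDerivAt (Function.uncurry (F (m+1)))
      (fderiv ℝ (Function.uncurry (F (m+1))) (p, q)) (p, q) :=
    (((hFs (m+1)).differentiable (by simp)) (p, q)).hasFDerivAt
  have h1 : HasDerivAt (fun s => F (m+1) p s)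
      (fderiv ℝ (Function.uncurry (F (m+1))) (p, q) ((0:ℝ), (1:ℝ))) q :=
    hdF.comp_hasDerivAt q hcurve
  exact (h1.unique (hF m p q))

lemma coeff_fderiv (F : ℕ → ℝ → ℝ → ℝ)
    (hFs : ∀ m, ContDiff ℝ (⊤ : ℕ∞) (Function.uncurry (F m)))
    (hF : ∀ m (p q : ℝ), HasDerivAt (fun s => F (m + 1) p s) (F m p q) q)
    (j : ℕ) (a : ℝ) (ha : a ≠ 0) (p q : ℝ) (hp : p ≠ 0) :
    DifferentiableAt ℝ (fun z : ℝ × ℝ => F (j+1) z.1 z.2 / a / z.1 ^ (j+1)) (p, q) ∧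
    fderiv ℝ (fun z : ℝ × ℝ => F (j+1) z.1 z.2 / a / z.1 ^ (j+1)) (p, q) ((0:ℝ), (1:ℝ))
      = F j p q / a / p ^ (j+1) := by
  have hgeq : (fun z : ℝ × ℝ => F (j+1) z.1 z.2 / a / z.1 ^ (j+1))
      = fun z : ℝ × ℝ => Function.uncurry (F (j+1)) z * (a * z.1 ^ (j+1))⁻¹ := by
    funext z
    rw [div_div, div_eq_mul_inv]
    rfl
  have hu : DifferentiableAt ℝ (Function.uncurry (F (j+1))) (p, q) :=
    ((hFs (j+1)).differentiable (by simp)) (p, q)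
  -- the inverse-power factor
  have hd1 : DifferentiableAt ℝ (fun t : ℝ => (a * t ^ (j+1))⁻¹) p :=
    ((differentiableAt_const a).mul (differentiableAt_pow _)).inv
      (mul_ne_zero ha (pow_ne_zero _ hp))
  have hvF : HasFDerivAt (fun z : ℝ × ℝ => (a * z.1 ^ (j+1))⁻¹)
      ((deriv (fun t : ℝ => (a * t ^ (j+1))⁻¹) p) •
        ContinuousLinearMap.fst ℝ ℝ ℝ) (p, q) :=
    HasDerivAt.comp_hasFDerivAt (f := (Prod.fst : ℝ × ℝ → ℝ)) (f' := ContinuousLinearMap.fst ℝ ℝ ℝ)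
      (p, q) hd1.hasDerivAt (hasFDerivAt_fst (𝕜 := ℝ))
  have hv : DifferentiableAt ℝ (fun z : ℝ × ℝ => (a * z.1 ^ (j+1))⁻¹) (p, q) :=
    hvF.differentiableAt
  constructor
  · rw [hgeq]; exact hu.mul hv
  · rw [hgeq, fderiv_fun_mul hu hv]
    simp only [ContinuousLinearMap.add_apply, ContinuousLinearMap.smul_apply, smul_eq_mul]
    rw [hvF.fderiv]
    rw [uncurry_fderiv_q F hFs hF j p q]
    simp only [ContinuousLinearMap.smul_apply, ContinuousLinearMap.coe_fst', smul_eq_mul]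
    show Function.uncurry (F (j+1)) (p, q) * (deriv _ p * (0:ℝ)) + (a * p ^ (j+1))⁻¹ * F j p q = _
    rw [mul_zero, mul_zero, zero_add, div_div, div_eq_mul_inv]
    ring
end coeff2

lemma Lop_finsum {d : ℕ} {ι : Type*} {s : Finset ι} {g : ι → Phase d → ℝ} {x : Phase d}
    (hg : ∀ j ∈ s, DifferentiableAt ℝ (g j) x) :
    Lop (fun y => ∑ j ∈ s, g j y) x = ∑ j ∈ s, Lop (g j) x := by
  unfold Lop
  have step : ∀ i' : Fin d, pdq i' (fun y => ∑ j ∈ s, g j y) x = ∑ j ∈ s, pdq i' (g j) x := by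
    intro i'
    show fderiv ℝ (fun y => ∑ j ∈ s, g j y) x _ = _
    rw [fderiv_fun_sum hg]
    simp [pdq]
  rw [Finset.sum_congr rfl (fun i' _ => by rw [step i'])]
  rw [Finset.sum_congr rfl (fun i' _ => Finset.mul_sum _ _ _)]
  exact Finset.sum_comm

/-- Integration by parts inverse: for `F = (f/k!) ∂^{k+ℓ}/∂pᵢᵏ∂qᵢˡ`, the operator
`G = ∑_{j=0}^{k} (1/(k-j)!) (∫^{(j+1)} f dqᵢ^{j+1} / pᵢ^{j+1}) ∂^{k+ℓ}/∂pᵢ^{k-j}∂qᵢ^{ℓ+j}`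
satisfies `[L, G] = F` where `pᵢ ≠ 0`. Here `F m` is an `m`-fold antiderivative of `f` in `qᵢ`. -/
theorem commutator_inverse_of_separable_operator {d : ℕ} (i : Fin d) (k ℓ : ℕ)
    (f : ℝ → ℝ → ℝ) (hf : ContDiff ℝ (⊤ : ℕ∞) (Function.uncurry f))
    (F : ℕ → ℝ → ℝ → ℝ) (hF0 : F 0 = f)
    (hFs : ∀ m, ContDiff ℝ (⊤ : ℕ∞) (Function.uncurry (F m)))
    (hF : ∀ m (p q : ℝ), HasDerivAt (fun s => F (m + 1) p s) (F m p q) q)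
    (φ : Phase d → ℝ) (hφ : ContDiff ℝ (⊤ : ℕ∞) φ) (x : Phase d) (hx : x.2 i ≠ 0) :
    Lop (fun y => ∑ j ∈ range (k + 1),
        F (j + 1) (y.2 i) (y.1 i) / ((k - j).factorial : ℝ) / (y.2 i) ^ (j + 1) *
          ((pdp i)^[k - j] ((pdq i)^[ℓ + j] φ)) y) x
      - (∑ j ∈ range (k + 1),
        F (j + 1) (x.2 i) (x.1 i) / ((k - j).factorial : ℝ) / (x.2 i) ^ (j + 1) *
          ((pdp i)^[k - j] ((pdq i)^[ℓ + j] (Lop φ))) x)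
      = f (x.2 i) (x.1 i) / (k.factorial : ℝ) * ((pdp i)^[k] ((pdq i)^[ℓ] φ)) x := by
  have hfac : ∀ j : ℕ, ((k - j).factorial : ℝ) ≠ 0 :=
    fun j => Nat.cast_ne_zero.mpr (Nat.factorial_ne_zero _)
  have hΨs : ∀ j : ℕ, ContDiff ℝ (⊤ : ℕ∞) ((pdp i)^[k - j] ((pdq i)^[ℓ + j] φ)) :=
    fun j => contDiff_pdp_iter i _ (contDiff_pdq_iter i _ hφ)
  have hC := fun j : ℕ => coeff_fderiv F hFs hF j ((k - j).factorial : ℝ) (hfac j)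
    (x.2 i) (x.1 i) hx
  have hCd : ∀ j : ℕ, DifferentiableAt ℝ
      (fun y : Phase d => F (j + 1) (y.2 i) (y.1 i) / ((k - j).factorial : ℝ)
        / (y.2 i) ^ (j + 1)) x :=
    fun j => diff_sep i (hC j).1
  -- abbreviations (as values)
  set A : ℕ → ℝ := fun j =>
    F j (x.2 i) (x.1 i) / ((k - j).factorial : ℝ) / (x.2 i) ^ j *
      ((pdp i)^[k - j] ((pdq i)^[ℓ + j] φ)) x with hA
  set B : ℕ → ℝ := fun j =>
    F (j + 1) (x.2 i) (x.1 i) / ((k - j).factorial : ℝ) / (x.2 i) ^ (j + 1) *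
      Lop ((pdp i)^[k - j] ((pdq i)^[ℓ + j] φ)) x with hB
  set D : ℕ → ℝ := fun j =>
    F (j + 1) (x.2 i) (x.1 i) / ((k - j).factorial : ℝ) / (x.2 i) ^ (j + 1) *
      (((k - j : ℕ) : ℝ) * ((pdp i)^[k - (j + 1)] ((pdq i)^[ℓ + (j + 1)] φ)) x) with hD
  -- Step 1: expand Lop over the sum
  rw [Lop_finsum (fun j _ =>
    (hCd j).fun_mul ((hΨs j).differentiable (by simp) x))]
  -- Step 2: per-term value of Lop of the product
  have term1 : ∀ j ∈ range (k + 1),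
      Lop (fun y => F (j + 1) (y.2 i) (y.1 i) / ((k - j).factorial : ℝ) / (y.2 i) ^ (j + 1) *
        ((pdp i)^[k - j] ((pdq i)^[ℓ + j] φ)) y) x = A j + B j := by
    intro j _
    rw [Lop_mul (hCd j) ((hΨs j).differentiable (by simp) x)]
    congr 1
    have h := Lop_sep i (g := fun z : ℝ × ℝ =>
      F (j + 1) z.1 z.2 / ((k - j).factorial : ℝ) / z.1 ^ (j + 1)) (hC j).1
    rw [(hC j).2] at h
    rw [show Lop (fun y : Phase d => F (j + 1) (y.2 i) (y.1 i) / ((k - j).factorial : ℝ)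
        / (y.2 i) ^ (j + 1)) x = x.2 i * (F j (x.2 i) (x.1 i) / ((k - j).factorial : ℝ)
        / (x.2 i) ^ (j + 1)) from h]
    rw [hA]
    have : x.2 i * (F j (x.2 i) (x.1 i) / ((k - j).factorial : ℝ) / (x.2 i) ^ (j + 1))
        = F j (x.2 i) (x.1 i) / ((k - j).factorial : ℝ) / (x.2 i) ^ j := by
      field_simp
      ring
    rw [this]
  rw [Finset.sum_congr rfl term1]
  -- Step 3: per-term value of the subtracted sum
  have term2 : ∀ j ∈ range (k + 1),
      F (j + 1) (x.2 i) (x.1 i) / ((k - j).factorial : ℝ) / (x.2 i) ^ (j + 1) *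
        ((pdp i)^[k - j] ((pdq i)^[ℓ + j] (Lop φ))) x = B j + D j := by
    intro j hj
    rcases Nat.lt_or_ge j k with h | h
    · have hm : k - j = (k - j - 1) + 1 := by omega
      rw [hm, pdp_iter_Lop i (k - j - 1) (ℓ + j) hφ]
      have e1 : k - j - 1 = k - (j + 1) := by omega
      have e2 : ℓ + j + 1 = ℓ + (j + 1) := by omega
      have e3 : ((k - j - 1 : ℕ) : ℝ) + 1 = ((k - j : ℕ) : ℝ) := by
        rw [hm]; push_cast; ring
      rw [hB, hD, ← hm]
      simp only []
      rw [e3, e1, e2]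
      ring
    · have hjk : j = k := by
        have : j < k + 1 := Finset.mem_range.mp hj
        omega
      subst hjk
      simp only [Nat.sub_self, Function.iterate_zero, id_eq, Nat.cast_zero]
      rw [pdq_iter_Lop i (ℓ + j) hφ]
      rw [hB, hD]
      simp only [Nat.sub_self, Function.iterate_zero, id_eq, Nat.cast_zero]
      ring
  rw [Finset.sum_congr rfl term2]
  rw [Finset.sum_add_distrib, Finset.sum_add_distrib]
  have hsimp : (∑ j ∈ range (k + 1), A j + ∑ j ∈ range (k + 1), B j)
      - (∑ j ∈ range (k + 1), B j + ∑ j ∈ range (k + 1), D j)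
      = ∑ j ∈ range (k + 1), A j - ∑ j ∈ range (k + 1), D j := by ring
  rw [hsimp]
  -- Step 4: telescoping
  have hDA : ∀ j ∈ range k, D j = A (j + 1) := by
    intro j hj
    have hjk : j < k := Finset.mem_range.mp hj
    have hfact : ((k - j).factorial : ℝ)
        = ((k - j : ℕ) : ℝ) * ((k - (j + 1)).factorial : ℝ) := by
      have h1 : k - j = (k - (j + 1)) + 1 := by omega
      rw [h1, Nat.factorial_succ]
      push_cast
      ring
    rw [hD, hA]
    simp only []
    rw [hfact]
    have hkj : ((k - j : ℕ) : ℝ) ≠ 0 := by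
      have : 0 < k - j := by omega
      positivity
    field_simp
  have hDk : D k = 0 := by
    rw [hD]; simp
  rw [Finset.sum_range_succ (fun j => D j) k, hDk, add_zero,
    Finset.sum_congr rfl hDA, Finset.sum_range_succ' (fun j => A j) k]
  rw [add_sub_cancel_left]
  rw [hA]
  simp only [Nat.sub_zero, Nat.add_zero, pow_zero, hF0]
  rw [div_one]
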